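/- arXiv:2505.21253 — 3 statements merged into one kernel-verified Lean document; each statement's English description precedes it below -/
import Mathlib

section
/- Let G be a locally compact group with left Haar measure μ_G and modular function Δ_G, let H be a closed subgroup with left Haar measure μ_H and modular function Δ_H, and let q : G → G/H be the quotient map (G/H with the quotient topology). Let ρ : G → ℝ_{>0} be continuous with ρ(xh) = (Δ_H(h)/Δ_G(h)) · ρ(x) for all x ∈ G, h ∈ H. Let μ be a Radon measure on G/H satisfying: (Weil formula) for every f ∈ C_c(G), ∫_G f(x) ρ(x) dμ_G(x) = ∫_{G/H} F_f dμ, where F_f : G/H → ℂ is the (well-defined) function with F_f(q(y)) = ∫_H f(yh) dμ_H(h); and (strong quasi-invariance) for every x ∈ G and every Borel set E ⊆ G/H, μ(x • E) = ∫_E λ_x dμ, where λ_x : G/H → ℝ_{>0} is the (well-defined) function with λ_x(q(y)) = ρ(xy)/ρ(y). Then H is open in G if and only if μ({q(e)}) > 0, where q(e) ∈ G/H is the identity coset. -/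
/-!
If `H` is open, take `f ∈ C_c(G)` with `0 ≤ f`, `f(e) = 1` and support in `H`. By left invariance
of `μ_H`, its fibre integral is `(∫_H f dμ_H) · 1_{eH}`, so the Weil formula reads
`∫_G f ρ dμ_G = μ({eH}) ∫_H f dμ_H`; the left side is positive, hence so is `μ({eH})`.

Conversely, applying strong quasi-invariance to `E = {eH}` gives `μ({xH}) = (ρ(x) / ρ(e)) μ({eH})`.
If `H` is not open, `eH` is not isolated in the `T₁` space `G/H`, so the image of a compact
neighbourhood `K` of `e` is infinite. When `μ({eH}) > 0`, its points have measure at least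
`(min_K ρ / ρ(e)) μ({eH}) > 0`, so this compact image has infinite measure, which is impossible
for a Radon measure.
-/

open MeasureTheory Pointwise Set Topology Function

section

variable {G : Type*} [Group G] {H : Subgroup G}

theorem QuotientGroup.exists_lift_div_of_mul_right {ρ : G → ℝ} (hρ0 : ∀ x, ρ x ≠ 0)
    (c : H → ℝ) (hρ : ∀ (x : G) (h : H), ρ (x * h) = c h * ρ x) (x : G) :
    ∃ lam : G ⧸ H → ℝ, ∀ y : G, lam y = ρ (x * y) / ρ y := by
  refine ⟨Quotient.lift (fun y => ρ (x * y) / ρ y) fun a b hab => ?_, fun _ => rfl⟩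
  obtain ⟨h, rfl⟩ : ∃ h : H, b = a * h :=
    ⟨⟨a⁻¹ * b, QuotientGroup.leftRel_apply.mp hab⟩, by simp⟩
  have hc : c h ≠ 0 := left_ne_zero_of_mul (hρ a h ▸ hρ0 (a * h))
  simp only [← mul_assoc, hρ, mul_div_mul_left _ _ hc]

theorem Subgroup.integral_mul_eq_indicator_of_support_subset {E : Type*} [NormedAddCommGroup E]
    [NormedSpace ℝ E] [MeasurableSpace H] [MeasurableMul H] (μH : Measure H)
    [μH.IsMulLeftInvariant] {f : G → E} (hf : support f ⊆ H) (y : G) :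
    ∫ h : H, f (y * h) ∂μH = (H : Set G).indicator (fun _ => ∫ h : H, f h ∂μH) y := by
  by_cases hy : y ∈ H
  · rw [indicator_of_mem hy]
    exact integral_mul_left_eq_self (fun h : H => f h) ⟨y, hy⟩
  · rw [indicator_of_notMem hy, integral_eq_zero_of_ae (.of_forall fun h => ?_)]
    exact notMem_support.mp fun hyh => hy (by simpa using H.mul_mem (hf hyh) (H.inv_mem h.2))

theorem QuotientGroup.infinite_image_mk_of_not_isOpen [TopologicalSpace G] [IsTopologicalGroup G]
    [T1Space (G ⧸ H)] (hH : ¬IsOpen (H : Set G)) {s : Set G} (hs : s ∈ 𝓝 1) :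
    ((↑) '' s : Set (G ⧸ H)).Infinite := fun hfin =>
  hH <| preimage_mk_one H ▸ (isOpen_singleton_of_finite_mem_nhds _
    (isOpenMap_coe.image_mem_nhds hs) hfin).preimage continuous_mk

variable [MeasurableSpace (G ⧸ H)]

def IsStronglyQuasiInvariant (μ : Measure (G ⧸ H)) (ρ : G → ℝ) : Prop :=
  ∀ (x : G) (E : Set (G ⧸ H)), MeasurableSet E →
    ∀ lam : G ⧸ H → ℝ, (∀ y : G, lam (y : G ⧸ H) = ρ (x * y) / ρ y) →
      μ (x • E) = ENNReal.ofReal (∫ p in E, lam p ∂μ)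

theorem IsStronglyQuasiInvariant.measure_singleton_mk [MeasurableSingletonClass (G ⧸ H)]
    {μ : Measure (G ⧸ H)} {ρ : G → ℝ} (hμ : IsStronglyQuasiInvariant μ ρ) (hρ0 : ∀ x, ρ x ≠ 0)
    (c : H → ℝ) (hρ : ∀ (x : G) (h : H), ρ (x * h) = c h * ρ x)
    (h1 : μ {((1 : G) : G ⧸ H)} ≠ ⊤) (x : G) :
    μ {(x : G ⧸ H)} = ENNReal.ofReal (ρ x / ρ 1) * μ {((1 : G) : G ⧸ H)} := by
  obtain ⟨lam, hlam⟩ := QuotientGroup.exists_lift_div_of_mul_right hρ0 c hρ x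
  have hx := hμ x {((1 : G) : G ⧸ H)} (measurableSet_singleton _) lam hlam
  rwa [smul_set_singleton, MulAction.Quotient.smul_mk, smul_eq_mul, mul_one, integral_singleton,
    hlam, mul_one, smul_eq_mul, ENNReal.ofReal_mul measureReal_nonneg, ofReal_measureReal h1,
    mul_comm] at hx

theorem IsStronglyQuasiInvariant.isOpen_of_measure_singleton_one_pos [TopologicalSpace G]
    [IsTopologicalGroup G] [LocallyCompactSpace G] [T1Space (G ⧸ H)] [BorelSpace (G ⧸ H)]
    {μ : Measure (G ⧸ H)} [IsFiniteMeasureOnCompacts μ] {ρ : G → ℝ} (hμ : IsStronglyQuasiInvariant μ ρ)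
    (hρcont : Continuous ρ) (hρpos : ∀ x, 0 < ρ x) (c : H → ℝ)
    (hρ : ∀ (x : G) (h : H), ρ (x * h) = c h * ρ x) (hpos : 0 < μ {((1 : G) : G ⧸ H)}) :
    IsOpen (H : Set G) := by
  by_contra hH
  obtain ⟨K, hK, hK1⟩ := exists_compact_mem_nhds (1 : G)
  obtain ⟨x₀, -, hx₀⟩ := hK.exists_isMinOn ⟨1, mem_of_mem_nhds hK1⟩ hρcont.continuousOn
  refine ((hK.image QuotientGroup.continuous_mk).measure_lt_top (μ := μ)).ne
    ((QuotientGroup.infinite_image_mk_of_not_isOpen hH hK1).meas_eq_top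
      ⟨ENNReal.ofReal (ρ x₀ / ρ 1) * μ {((1 : G) : G ⧸ H)}, ?_, ?_⟩)
  · exact mul_ne_zero (ENNReal.ofReal_pos.mpr (div_pos (hρpos _) (hρpos _))).ne' hpos.ne'
  · rintro _ ⟨x, hx, rfl⟩
    rw [hμ.measure_singleton_mk (fun x => (hρpos x).ne') c hρ
      isCompact_singleton.measure_lt_top.ne x]
    gcongr
    exacts [(hρpos 1).le, hx₀ hx]

variable [TopologicalSpace G] [MeasurableSpace G]

def SatisfiesWeilFormula (μG : Measure G) (μH : Measure H) (ρ : G → ℝ) (μ : Measure (G ⧸ H)) :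
    Prop :=
  ∀ f : G → ℂ, Continuous f → HasCompactSupport f →
    ∀ F : G ⧸ H → ℂ, (∀ y : G, F (y : G ⧸ H) = ∫ h : H, f (y * h) ∂μH) →
      ∫ x, f x * (ρ x : ℂ) ∂μG = ∫ p, F p ∂μ

theorem SatisfiesWeilFormula.measure_singleton_one_pos [IsTopologicalGroup G]
    [LocallyCompactSpace G] [BorelSpace G] [MeasurableMul H] [MeasurableSingletonClass (G ⧸ H)]
    {μG : Measure G} [μG.IsOpenPosMeasure] [IsFiniteMeasureOnCompacts μG]
    {μH : Measure H} [μH.IsMulLeftInvariant] {ρ : G → ℝ} {μ : Measure (G ⧸ H)}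
    (hW : SatisfiesWeilFormula μG μH ρ μ) (hρcont : Continuous ρ) (hρpos : ∀ x, 0 < ρ x)
    (hH : IsOpen (H : Set G)) :
    0 < μ {((1 : G) : G ⧸ H)} := by
  obtain ⟨g, hg1, hg0, hgc, hg01⟩ := exists_continuous_one_zero_of_isCompact isCompact_singleton
    hH.isClosed_compl (disjoint_singleton_left.mpr (not_not.mpr H.one_mem))
  set f : G → ℂ := fun x => (g x : ℂ)
  have hfH : support f ⊆ H := fun x hx => not_not.mp fun hxH => hx (by simp [f, hg0 hxH])
  have hF : ∀ y : G, ({((1 : G) : G ⧸ H)} : Set (G ⧸ H)).indicator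
      (fun _ => ∫ h : H, f h ∂μH) (y : G ⧸ H) = ∫ h : H, f (y * h) ∂μH := by
    intro y
    rw [H.integral_mul_eq_indicator_of_support_subset μH hfH, ← QuotientGroup.preimage_mk_one H,
      ← indicator_comp_right]
    rfl
  have hWf := hW f (by fun_prop) (hgc.comp_left Complex.ofReal_zero) _ hF
  have hgρ : 0 < ∫ x, g x * ρ x ∂μG :=
    (g.continuous.mul hρcont).integral_pos_of_hasCompactSupport_nonneg_nonzero hgc.mul_right
      (fun x => mul_nonneg (hg01 x).1 (hρpos x).le) (x := 1) (by simp [hg1 rfl, (hρpos 1).ne'])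
  refine pos_iff_ne_zero.mpr fun h0 => hgρ.ne' ?_
  rw [integral_indicator_const _ (measurableSet_singleton _), measureReal_def, h0,
    ENNReal.toReal_zero, zero_smul] at hWf
  have hgρ_zero : ((∫ x, g x * ρ x ∂μG : ℝ) : ℂ) = 0 := by
    rw [← integral_complex_ofReal]
    simpa [f] using hWf
  exact_mod_cast hgρ_zero

end

theorem stmt6_general {G : Type*} [Group G] [TopologicalSpace G] [IsTopologicalGroup G]
    [LocallyCompactSpace G] [MeasurableSpace G] [BorelSpace G]
    (μG : Measure G) [μG.IsHaarMeasure]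
    (ΔG : G → ℝ)
    (H : Subgroup G) (hHclosed : IsClosed (H : Set G))
    (μH : Measure H) [μH.IsHaarMeasure]
    (ΔH : H → ℝ)
    (ρ : G → ℝ) (hρcont : Continuous ρ) (hρpos : ∀ x, 0 < ρ x)
    (hρ : ∀ (x : G) (h : H), ρ (x * h) = (ΔH h / ΔG (h : G)) * ρ x)
    [MeasurableSpace (G ⧸ H)] [BorelSpace (G ⧸ H)]
    (μ : Measure (G ⧸ H)) [μ.Regular]
    (hWeil : ∀ f : G → ℂ, Continuous f → HasCompactSupport f →
      ∀ F : G ⧸ H → ℂ, (∀ y : G, F (y : G ⧸ H) = ∫ h : H, f (y * h) ∂μH) →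
        ∫ x, f x * (ρ x : ℂ) ∂μG = ∫ p, F p ∂μ)
    (hquasi : ∀ (x : G) (E : Set (G ⧸ H)), MeasurableSet E →
      ∀ lam : G ⧸ H → ℝ, (∀ y : G, lam (y : G ⧸ H) = ρ (x * y) / ρ y) →
        μ (x • E) = ENNReal.ofReal (∫ p in E, lam p ∂μ)) :
    IsOpen (H : Set G) ↔ 0 < μ {((1 : G) : G ⧸ H)} := by
  have : T1Space (G ⧸ H) := QuotientGroup.t1Space_iff.mpr hHclosed
  exact ⟨SatisfiesWeilFormula.measure_singleton_one_pos hWeil hρcont hρpos,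
    IsStronglyQuasiInvariant.isOpen_of_measure_singleton_one_pos hquasi hρcont hρpos _ hρ⟩

/-- (Openness of a closed subgroup via a strongly quasi-invariant measure on
the quotient.) Let `G` be a locally compact group with left Haar measure `μG` and modular
function `ΔG`, `H` a closed subgroup with left Haar measure `μH` and modular function `ΔH`,
`ρ` a rho-function for the pair `(G, H)` and `μ` a Radon measure on `G ⧸ H` satisfying the
Weil formula and strong quasi-invariance relative to `ρ`. Then `H` is open in `G` iff
`μ({eH}) > 0`. -/
theorem stmt6 {G : Type*} [Group G] [TopologicalSpace G] [IsTopologicalGroup G]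
    [T2Space G] [LocallyCompactSpace G] [MeasurableSpace G] [BorelSpace G]
    (μG : Measure G) [μG.IsHaarMeasure]
    (ΔG : G → ℝ) (hΔGpos : ∀ g, 0 < ΔG g)
    (hΔG : ∀ g : G, Measure.map (fun x => x * g) μG = ENNReal.ofReal ((ΔG g)⁻¹) • μG)
    (H : Subgroup G) (hHclosed : IsClosed (H : Set G))
    (μH : Measure H) [μH.IsHaarMeasure]
    (ΔH : H → ℝ) (hΔHpos : ∀ h, 0 < ΔH h)
    (hΔH : ∀ h : H, Measure.map (fun x => x * h) μH = ENNReal.ofReal ((ΔH h)⁻¹) • μH)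
    (ρ : G → ℝ) (hρcont : Continuous ρ) (hρpos : ∀ x, 0 < ρ x)
    (hρ : ∀ (x : G) (h : H), ρ (x * h) = (ΔH h / ΔG (h : G)) * ρ x)
    [MeasurableSpace (G ⧸ H)] [BorelSpace (G ⧸ H)]
    (μ : Measure (G ⧸ H)) [μ.Regular]
    (hWeil : ∀ f : G → ℂ, Continuous f → HasCompactSupport f →
      ∀ F : G ⧸ H → ℂ, (∀ y : G, F (y : G ⧸ H) = ∫ h : H, f (y * h) ∂μH) →
        ∫ x, f x * (ρ x : ℂ) ∂μG = ∫ p, F p ∂μ)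
    (hquasi : ∀ (x : G) (E : Set (G ⧸ H)), MeasurableSet E →
      ∀ lam : G ⧸ H → ℝ, (∀ y : G, lam (y : G ⧸ H) = ρ (x * y) / ρ y) →
        μ (x • E) = ENNReal.ofReal (∫ p in E, lam p ∂μ)) :
    IsOpen (H : Set G) ↔ 0 < μ {((1 : G) : G ⧸ H)} :=
  stmt6_general μG ΔG H hHclosed μH ΔH ρ hρcont hρpos hρ μ hWeil hquasi
end

section
/- Let Γ be a countable group and let μ be the Bernoulli(1/2) product probability measure on X = Γ → Bool, with X given the product topology (so X is a compact metrizable space and μ is a Borel probability measure). For γ ∈ Γ let s_γ : X → X be the shift (s_γ x)(δ) = x(γ⁻¹ δ). Then for every Borel set E ⊆ X with μ(E) > 0, there exists a finite set F ⊆ Γ such that for every γ ∈ Γ with (γ • F) ∩ F = ∅ (where γ • F = {γδ : δ ∈ F}), one has μ(s_γ⁻¹(E) ∩ E) > 0. -/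
/-!
Under the product measure `P = ν^Γ`, cylinder sets depending on disjoint finite sets of
coordinates are independent, and the shift `s_γ` preserves `P` and moves the coordinates of a
cylinder over `F` to `γ⁻¹F`. Approximate `E` by a cylinder `C` over a finite set `F` with
`P(E ∆ C) < P(E)² / 4`. When `γF ∩ F = ∅`, `P(s_γ⁻¹C ∩ C) = P(C)²`, and invariance moves this to
`P(s_γ⁻¹E ∩ E) ≥ P(C)² - 2 P(E ∆ C) > 0`. The hypothesis on `μ` pins it down as the
fair-coin product measure, by uniqueness of projective limits.
-/

open MeasureTheory ProbabilityTheory Measure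
open scoped ENNReal symmDiff

section Independence

variable {ι : Type*} {X : ι → Type*} [∀ i, MeasurableSpace (X i)]
  (μ : (i : ι) → Measure (X i)) [∀ i, IsProbabilityMeasure (μ i)]

theorem infinitePi_cylinder_inter_cylinder {s t : Finset ι} (hst : Disjoint s t)
    {S : Set (Π i : s, X i)} {T : Set (Π i : t, X i)} (hS : MeasurableSet S)
    (hT : MeasurableSet T) :
    infinitePi μ (cylinder s S ∩ cylinder t T) =
      infinitePi μ (cylinder s S) * infinitePi μ (cylinder t T) :=
  ((iIndepFun_infinitePi (X := fun _ => id) fun _ => measurable_id).indepFun_finset s t hst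
    fun i => measurable_pi_apply i).measure_inter_preimage_eq_mul S T hS hT

end Independence

section Shift

variable {Γ α : Type*} [Group Γ]

def leftShift (γ : Γ) (x : Γ → α) : Γ → α := fun δ => x (γ⁻¹ * δ)

theorem leftShift_preimage_cylinder [MeasurableSpace α] (γ : Γ) (s : Finset Γ)
    (S : Set (Π _ : s, α)) :
    leftShift γ ⁻¹' cylinder s S = cylinder (s.map (Equiv.mulLeft γ⁻¹).toEmbedding)
      ((fun y (i : s) => y ⟨γ⁻¹ * i, Finset.mem_map_equiv.2 (by simp)⟩) ⁻¹' S) := rfl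

variable [MeasurableSpace α] (ν : Measure α) [IsProbabilityMeasure ν]

theorem leftShift_eq_piCongrLeft (γ : Γ) :
    (leftShift γ : (Γ → α) → Γ → α) =
      MeasurableEquiv.piCongrLeft (fun _ => α) (Equiv.mulLeft γ) := by
  funext x δ
  simp [leftShift, MeasurableEquiv.coe_piCongrLeft, Equiv.piCongrLeft_apply_eq_cast]

theorem measurePreserving_leftShift (γ : Γ) :
    MeasurePreserving (leftShift γ) (infinitePi fun _ : Γ => ν) (infinitePi fun _ : Γ => ν) := by
  rw [leftShift_eq_piCongrLeft]
  exact ⟨MeasurableEquiv.measurable _, infinitePi_map_piCongrLeft (fun _ => ν) (Equiv.mulLeft γ)⟩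

theorem infinitePi_leftShift_preimage_cylinder_inter_cylinder {γ : Γ} {s : Finset Γ}
    (hγ : Disjoint ((γ * ·) '' (s : Set Γ)) s) {S : Set (Π _ : s, α)} (hS : MeasurableSet S) :
    infinitePi (fun _ : Γ => ν) (leftShift γ ⁻¹' cylinder s S ∩ cylinder s S) =
      infinitePi (fun _ : Γ => ν) (cylinder s S) ^ 2 := by
  have hdisj : Disjoint (s.map (Equiv.mulLeft γ⁻¹).toEmbedding) s := by
    refine Finset.disjoint_left.2 fun δ hδ hδs => Set.disjoint_left.1 hγ ⟨δ, hδs, rfl⟩ ?_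
    simpa using hδ
  have hreindex : Measurable fun (y : Π _ : s.map (Equiv.mulLeft γ⁻¹).toEmbedding, α) (i : s) =>
      y ⟨γ⁻¹ * i, Finset.mem_map_equiv.2 (by simp)⟩ :=
    measurable_pi_lambda _ fun _ => measurable_pi_apply _
  rw [sq, leftShift_preimage_cylinder, infinitePi_cylinder_inter_cylinder _ hdisj (hreindex hS) hS,
    ← leftShift_preimage_cylinder,
    (measurePreserving_leftShift ν γ).measure_preimage (hS.cylinder s).nullMeasurableSet]

end Shift

theorem MeasureTheory.MeasurePreserving.measureReal_preimage_inter_le {β : Type*}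
    [MeasurableSpace β] {μ : Measure β} [IsFiniteMeasure μ] {T : β → β}
    (hT : MeasurePreserving T μ μ) {E C : Set β} (hE : MeasurableSet E) (hC : MeasurableSet C) :
    μ.real (T ⁻¹' C ∩ C) ≤ μ.real (T ⁻¹' E ∩ E) + 2 * μ.real (E ∆ C) := by
  have hsub : T ⁻¹' C ∩ C ⊆ (T ⁻¹' E ∩ E) ∪ (T ⁻¹' (E ∆ C) ∪ E ∆ C) := by
    rintro x ⟨hTx, hx⟩
    by_cases hxE : x ∈ E <;> by_cases hTxE : T x ∈ E <;> simp_all [Set.mem_symmDiff]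
  calc μ.real (T ⁻¹' C ∩ C)
      ≤ μ.real (T ⁻¹' E ∩ E) + (μ.real (T ⁻¹' (E ∆ C)) + μ.real (E ∆ C)) := by
        grw [measureReal_mono hsub, measureReal_union_le, measureReal_union_le]
    _ = μ.real (T ⁻¹' E ∩ E) + 2 * μ.real (E ∆ C) := by
        rw [hT.measureReal_preimage (hE.symmDiff hC).nullMeasurableSet]; ring

theorem exists_finset_forall_disjoint_measure_leftShift_preimage_inter_pos {Γ α : Type*}
    [Group Γ] [MeasurableSpace α] (ν : Measure α) [IsProbabilityMeasure ν] {E : Set (Γ → α)}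
    (hE : MeasurableSet E) (hpos : 0 < infinitePi (fun _ : Γ => ν) E) :
    ∃ F : Finset Γ, ∀ γ : Γ, Disjoint ((γ * ·) '' (F : Set Γ)) F →
      0 < infinitePi (fun _ : Γ => ν) (leftShift γ ⁻¹' E ∩ E) := by
  set P := infinitePi fun _ : Γ => ν
  set m := P.real E
  have hm : 0 < m := ENNReal.toReal_pos hpos.ne' (measure_ne_top _ _)
  have hm1 : m ≤ 1 := measureReal_le_one
  obtain ⟨C, hC, hEC⟩ := (MeasureDense.of_generateFrom_isSetAlgebra_finite P
    isSetAlgebra_measurableCylinders generateFrom_measurableCylinders.symm).approx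
    E hE (measure_ne_top _ _) (m ^ 2 / 4) (by positivity)
  obtain ⟨s, S, hS, rfl⟩ := (mem_measurableCylinders C).1 hC
  refine ⟨s, fun γ hγ => ?_⟩
  set c := P.real (cylinder s S)
  set d := P.real (E ∆ cylinder s S)
  have hd : d < m ^ 2 / 4 := ENNReal.toReal_lt_of_lt_ofReal hEC
  have hcover : m ≤ c + d := by
    refine (measureReal_mono fun x hx => ?_).trans (measureReal_union_le _ (E ∆ cylinder s S))
    by_cases hxC : x ∈ cylinder s S <;> simp_all [Set.mem_symmDiff]
  have hmix : P.real (leftShift γ ⁻¹' cylinder s S ∩ cylinder s S) = c ^ 2 := by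
    simp only [Measure.real, infinitePi_leftShift_preimage_cylinder_inter_cylinder ν hγ hS,
      ENNReal.toReal_pow, P, c]
  have hbound := (measurePreserving_leftShift ν γ).measureReal_preimage_inter_le hE
    (hS.cylinder s)
  -- `c ≥ m - m² / 4 ≥ 3m / 4`, so `c² ≥ 9m² / 16 > 2d`
  have : 0 < P.real (leftShift γ ⁻¹' E ∩ E) := by
    nlinarith [mul_self_nonneg (c - 3 * m / 4)]
  exact (ENNReal.toReal_pos_iff.1 this).1

noncomputable def fairCoin : Measure Bool := (PMF.uniformOfFintype Bool).toMeasure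

instance : IsProbabilityMeasure fairCoin := by unfold fairCoin; infer_instance

theorem eq_infinitePi_fairCoin {ι : Type*} (ν : Measure (ι → Bool))
    (hν : ∀ (s : Finset ι) (t : ι → Bool), ν {x | ∀ i ∈ s, x i = t i} = (1 / 2) ^ s.card) :
    ν = infinitePi fun _ => fairCoin := by
  refine IsProjectiveLimit.unique (fun s => ext_of_singleton fun u => ?_)
    (isProjectiveLimit_infinitePi _)
  classical
  have hcyl : s.restrict (π := fun _ => Bool) ⁻¹' {u} =
      {x : ι → Bool | ∀ i ∈ s, x i = if h : i ∈ s then u ⟨i, h⟩ else false} := by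
    ext x
    simp +contextual [funext_iff]
  rw [map_apply (Finset.measurable_restrict s) (measurableSet_singleton u), hcyl, hν, pi_singleton]
  simp [fairCoin]

theorem stmt15_general {Γ : Type*} [Group Γ]
    (μ : Measure (Γ → Bool))
    (hμ : ∀ (F₀ : Finset Γ) (t : Γ → Bool),
      μ {x | ∀ δ ∈ F₀, x δ = t δ} = (1 / 2 : ℝ≥0∞) ^ F₀.card)
    (E : Set (Γ → Bool)) (hE : MeasurableSet E) (hEpos : 0 < μ E) :
    ∃ F : Finset Γ, ∀ γ : Γ,
      Disjoint ((fun δ => γ * δ) '' (F : Set Γ)) (F : Set Γ) →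
      0 < μ ((fun x : Γ → Bool => fun δ => x (γ⁻¹ * δ)) ⁻¹' E ∩ E) := by
  obtain rfl := eq_infinitePi_fairCoin μ hμ
  exact exists_finset_forall_disjoint_measure_leftShift_preimage_inter_pos fairCoin hE hEpos

/-- **Statement 15.** Let `Γ` be a countable group and `μ` the Bernoulli(1/2) product
probability measure on `X = Γ → Bool` (characterized by its values on cylinder sets). For
`γ ∈ Γ` let `s_γ : X → X` be the shift `(s_γ x)(δ) = x(γ⁻¹ δ)`. Then for every measurable
`E ⊆ X` with `μ(E) > 0` there exists a finite set `F ⊆ Γ` such that for every `γ ∈ Γ` with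
`(γ • F) ∩ F = ∅` one has `μ(s_γ⁻¹(E) ∩ E) > 0`. -/
theorem stmt15 {Γ : Type*} [Group Γ] [Countable Γ]
    (μ : Measure (Γ → Bool)) [IsProbabilityMeasure μ]
    (hμ : ∀ (F₀ : Finset Γ) (t : Γ → Bool),
      μ {x | ∀ δ ∈ F₀, x δ = t δ} = (1 / 2 : ℝ≥0∞) ^ F₀.card)
    (E : Set (Γ → Bool)) (hE : MeasurableSet E) (hEpos : 0 < μ E) :
    ∃ F : Finset Γ, ∀ γ : Γ,
      Disjoint ((fun δ => γ * δ) '' (F : Set Γ)) (F : Set Γ) →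
      0 < μ ((fun x : Γ → Bool => fun δ => x (γ⁻¹ * δ)) ⁻¹' E ∩ E) :=
  stmt15_general μ hμ E hE hEpos
end

section
/- Let Γ be a countable subgroup of the multiplicative group ℝ_{>0} that is dense in ℝ_{>0}, and let μ be the Bernoulli(1/2) product probability measure on X = Γ → Bool. For γ ∈ Γ let s_γ : X → X be the shift (s_γ x)(δ) = x(γ⁻¹ δ). Then for every Borel set E ⊆ X with μ(E) > 0 and every real number r > 0, r belongs to the closure in ℝ of the set {γ ∈ Γ : μ(s_γ⁻¹(E) ∩ E) > 0}. -/
/-!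
Under the uniform Bernoulli measure, coordinates are independent and reindexing by an injection
preserves the measure. Approximate `E` by a cylinder `C` depending on a finite set `s ⊆ Γ` of
coordinates. When `γ ∉ s s⁻¹`, the shifted cylinder depends on the disjoint set `γ⁻¹ s`, so
`μ(s_γ⁻¹ C ∩ C) = μ(C)²`, and this stays positive when `C` is replaced by `E`. Only finitely many
`γ` are excluded, and a dense subset of `ℝ_{>0}` minus a finite set is still dense there.
-/

open MeasureTheory Measure ProbabilityTheory Set Topology
open scoped ENNReal symmDiff Pointwise

theorem IsOpen.subset_closure_sdiff_finite {X : Type*} [TopologicalSpace X] [T1Space X]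
    [∀ x : X, (𝓝[≠] x).NeBot] {U D F : Set X} (hU : IsOpen U) (hUD : U ⊆ closure D)
    (hF : F.Finite) : U ⊆ closure (D \ F) := by
  have hdense : Dense (D ∪ Uᶜ) := fun x => by
    by_cases hx : x ∈ U
    · exact closure_mono subset_union_left (hUD hx)
    · exact subset_closure (Or.inr hx)
  intro x hx
  refine closure_mono ?_ (hU.inter_closure ⟨hx, (hdense.sdiff_finite hF) x⟩)
  rintro y ⟨hyU, hyD | hyU', hyF⟩
  exacts [⟨hyD, hyF⟩, absurd hyU hyU']

theorem pos_of_sq_le_add {a c d x : ℝ} (ha : 0 < a) (ha1 : a ≤ 1) (hd : d < a ^ 2 / 8)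
    (hac : a ≤ c + d) (hcx : c ^ 2 ≤ x + 2 * d) : 0 < x := by
  have hc : 7 * a / 8 < c := by nlinarith
  nlinarith

theorem measureReal_preimage_inter_pos {Ω : Type*} [MeasurableSpace Ω] {μ : Measure Ω}
    [IsProbabilityMeasure μ] {T : Ω → Ω} (hT : MeasurePreserving T μ μ) {E C : Set Ω}
    (hE : MeasurableSet E) (hC : MeasurableSet C) (hmix : μ.real (T ⁻¹' C ∩ C) = μ.real C ^ 2)
    (hE0 : 0 < μ.real E) (happrox : μ.real (E ∆ C) < μ.real E ^ 2 / 8) :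
    0 < μ.real (T ⁻¹' E ∩ E) := by
  have hCE : μ.real (C \ E) ≤ μ.real (E ∆ C) :=
    measureReal_mono fun x hx => Or.inr hx
  have hcover : μ.real (T ⁻¹' C ∩ C) ≤ μ.real (T ⁻¹' E ∩ E) + 2 * μ.real (E ∆ C) := by
    calc μ.real (T ⁻¹' C ∩ C) ≤ μ.real ((T ⁻¹' E ∩ E ∪ T ⁻¹' (C \ E)) ∪ C \ E) :=
          measureReal_mono fun x hx => by
            by_cases hxE : x ∈ E <;> by_cases hTxE : T x ∈ E <;> simp_all
      _ ≤ μ.real (T ⁻¹' E ∩ E) + μ.real (T ⁻¹' (C \ E)) + μ.real (C \ E) :=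
          (measureReal_union_le _ _).trans (by gcongr; exact measureReal_union_le _ _)
      _ ≤ μ.real (T ⁻¹' E ∩ E) + 2 * μ.real (E ∆ C) := by
          rw [hT.measureReal_preimage (hC.diff hE).nullMeasurableSet]; linarith
  have hEC : μ.real E ≤ μ.real C + μ.real (E ∆ C) :=
    (measureReal_mono fun x hx => by by_cases hxC : x ∈ C <;> simp_all [Set.mem_symmDiff]).trans
      (measureReal_union_le C (E ∆ C))
  exact pos_of_sq_le_add hE0 measureReal_le_one happrox hEC (hmix ▸ hcover)

section InfinitePi

variable {ι α : Type*} [mα : MeasurableSpace α]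

theorem comap_comp_le_iSup_comap_eval {κ : Type*} (f : κ → ι) :
    MeasurableSpace.comap (fun ω : ι → α => ω ∘ f) MeasurableSpace.pi
      ≤ ⨆ i ∈ range f, mα.comap fun ω : ι → α => ω i := by
  rw [MeasurableSpace.pi, MeasurableSpace.comap_iSup]
  refine iSup_le fun k => ?_
  rw [MeasurableSpace.comap_comp]
  exact le_iSup₂_of_le (f k) ⟨k, rfl⟩ le_rfl

variable (P : Measure α) [IsProbabilityMeasure P]

theorem measurePreserving_comp_infinitePi {f : ι → ι} (hf : f.Injective) :
    MeasurePreserving (fun ω : ι → α => ω ∘ f) (infinitePi fun _ => P) (infinitePi fun _ => P) :=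
  ⟨by fun_prop, map_infinitePi_infinitePi_of_inj hf⟩

theorem indepFun_comp_infinitePi {κ κ' : Type*} {f : κ → ι} {g : κ' → ι}
    (h : Disjoint (range f) (range g)) :
    IndepFun (fun ω : ι → α => ω ∘ f) (fun ω => ω ∘ g) (infinitePi fun _ => P) := by
  have hcoord : iIndepFun (fun i (ω : ι → α) => ω i) (infinitePi fun _ => P) :=
    iIndepFun_infinitePi (X := fun _ => id) fun _ => measurable_id
  exact indep_of_indep_of_le_right (indep_of_indep_of_le_left
    (indep_iSup_of_disjoint (fun i => (measurable_pi_apply i).comap_le) hcoord.iIndep h)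
    (comap_comp_le_iSup_comap_eval f)) (comap_comp_le_iSup_comap_eval g)

theorem infinitePi_preimage_comp_cylinder_inter {f : ι → ι} (hf : f.Injective) {s : Finset ι}
    {S : Set (s → α)} (hS : MeasurableSet S) (hdisj : Disjoint (f '' s) s) :
    (infinitePi fun _ => P) ((fun ω => ω ∘ f) ⁻¹' cylinder s S ∩ cylinder s S)
      = (infinitePi fun _ => P) (cylinder s S) ^ 2 := by
  have hind := indepFun_comp_infinitePi P (f := f ∘ ((↑) : s → ι)) (g := ((↑) : s → ι))
    (by simpa only [range_comp, Subtype.range_coe_subtype, Finset.setOfPred_mem] using hdisj)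
  have hpres : (infinitePi fun _ => P) ((fun ω => ω ∘ f) ⁻¹' cylinder s S)
      = (infinitePi fun _ => P) (cylinder s S) :=
    (measurePreserving_comp_infinitePi P hf).measure_preimage
      (MeasurableSet.cylinder s hS).nullMeasurableSet
  calc _ = (infinitePi fun _ => P) ((fun ω => ω ∘ f) ⁻¹' cylinder s S)
        * (infinitePi fun _ => P) (cylinder s S) := hind.measure_inter_preimage_eq_mul _ _ hS hS
    _ = _ := by rw [hpres, sq]

end InfinitePi

theorem exists_cylinder_measure_symmDiff_lt {ι : Type*} {α : ι → Type*}
    [∀ i, MeasurableSpace (α i)] (μ : Measure (∀ i, α i)) [IsFiniteMeasure μ] {E : Set (∀ i, α i)}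
    (hE : MeasurableSet E) {ε : ℝ} (hε : 0 < ε) :
    ∃ (s : Finset ι) (S : Set (∀ i : s, α i)), MeasurableSet S ∧
      μ (E ∆ cylinder s S) < ENNReal.ofReal ε := by
  obtain ⟨C, hC, happrox⟩ := (MeasureDense.of_generateFrom_isSetAlgebra_finite μ
    isSetAlgebra_measurableCylinders generateFrom_measurableCylinders.symm).approx E hE
    (measure_ne_top μ E) ε hε
  obtain ⟨s, S, hS, rfl⟩ := (mem_measurableCylinders C).1 hC
  exact ⟨s, S, hS, happrox⟩

theorem eq_infinitePi_uniformOfFintype {ι : Type*} {μ : Measure (ι → Bool)}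
    (hμ : ∀ (F₀ : Finset ι) (t : ι → Bool),
      μ {x | ∀ δ ∈ F₀, x δ = t δ} = (1 / 2 : ℝ≥0∞) ^ F₀.card) :
    μ = infinitePi fun _ => (PMF.uniformOfFintype Bool).toMeasure := by
  classical
  refine IsProjectiveLimit.unique (fun I => ?_) (isProjectiveLimit_infinitePi _)
  refine ext_of_singleton fun u => ?_
  have hfiber : I.restrict ⁻¹' ({u} : Set (I → Bool))
      = {x : ι → Bool | ∀ δ ∈ I, x δ = if h : δ ∈ I then u ⟨δ, h⟩ else false} := by
    ext x
    simp +contextual [funext_iff]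
  rw [map_apply (Finset.measurable_restrict I) (measurableSet_singleton u), hfiber, hμ,
    ← univ_pi_singleton, Measure.pi_pi]
  simp [PMF.uniformOfFintype_apply]

theorem disjoint_image_mul_left_of_notMem_mul_inv {G : Type*} [Group G] {s : Set G} {γ : G}
    (hγ : γ ∉ s * s⁻¹) : Disjoint ((γ⁻¹ * ·) '' s) s := by
  rw [Set.disjoint_left]
  rintro _ ⟨i, hi, rfl⟩ hj
  exact hγ ⟨i, hi, (γ⁻¹ * i)⁻¹, inv_mem_inv.2 hj, by group⟩

theorem stmt16_general (Γ : Subgroup ℝˣ)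
    (hdense : ∀ r : ℝ, 0 < r → r ∈ closure {y : ℝ | ∃ γ ∈ Γ, (γ : ℝ) = y})
    (μ : Measure (Γ → Bool))
    (hμ : ∀ (F₀ : Finset Γ) (t : Γ → Bool),
      μ {x | ∀ δ ∈ F₀, x δ = t δ} = (1 / 2 : ℝ≥0∞) ^ F₀.card)
    (E : Set (Γ → Bool)) (hE : MeasurableSet E) (hEpos : 0 < μ E)
    (r : ℝ) (hr : 0 < r) :
    r ∈ closure {y : ℝ | ∃ γ : Γ, ((γ : ℝˣ) : ℝ) = y ∧
      0 < μ ((fun x : Γ → Bool => fun δ : Γ => x (γ⁻¹ * δ)) ⁻¹' E ∩ E)} := by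
  obtain rfl := eq_infinitePi_uniformOfFintype hμ
  set P := (PMF.uniformOfFintype Bool).toMeasure
  have hE0 : 0 < (infinitePi fun _ => P).real E :=
    ENNReal.toReal_pos hEpos.ne' (measure_ne_top _ _)
  obtain ⟨s, S, hS, happrox⟩ := exists_cylinder_measure_symmDiff_lt (infinitePi fun _ : Γ => P) hE
    (ε := (infinitePi fun _ => P).real E ^ 2 / 8) (by positivity)
  have hgood : ∀ γ : Γ, γ ∉ (s : Set Γ) * (s : Set Γ)⁻¹ →
      0 < (infinitePi fun _ => P) ((fun x : Γ → Bool => fun δ : Γ => x (γ⁻¹ * δ)) ⁻¹' E ∩ E) := by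
    intro γ hγ
    have hmix := infinitePi_preimage_comp_cylinder_inter P (mul_right_injective γ⁻¹) hS
      (disjoint_image_mul_left_of_notMem_mul_inv hγ)
    refine ENNReal.toReal_pos_iff.1 (measureReal_preimage_inter_pos
      (measurePreserving_comp_infinitePi P (mul_right_injective γ⁻¹)) hE (.cylinder s hS) ?_ hE0
      (ENNReal.toReal_lt_of_lt_ofReal happrox)) |>.1
    rw [measureReal_def, hmix, ENNReal.toReal_pow]
    rfl
  have hbad : ((s : Set Γ) * (s : Set Γ)⁻¹).Finite := s.finite_toSet.mul s.finite_toSet.inv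
  refine closure_mono ?_ (isOpen_Ioi.subset_closure_sdiff_finite hdense
    (hbad.image fun γ : Γ => ((γ : ℝˣ) : ℝ)) hr)
  rintro _ ⟨⟨g, hg, rfl⟩, hgF⟩
  exact ⟨⟨g, hg⟩, rfl, hgood _ fun h => hgF ⟨_, h, rfl⟩⟩

/-- **Statement 16.** Let `Γ` be a countable subgroup of the multiplicative group of positive
reals (realized as a subgroup of `ℝˣ` all of whose elements are positive) that is dense in
`ℝ_{>0}`, and let `μ` be the Bernoulli(1/2) product probability measure on `X = Γ → Bool`
(characterized by its values on cylinder sets). For `γ ∈ Γ` let `s_γ : X → X` be the shift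
`(s_γ x)(δ) = x(γ⁻¹ δ)`. Then for every measurable `E ⊆ X` with `μ(E) > 0` and every real
`r > 0`, `r` belongs to the closure in `ℝ` of `{γ ∈ Γ : μ(s_γ⁻¹(E) ∩ E) > 0}`. -/
theorem stmt16 (Γ : Subgroup ℝˣ) (hΓpos : ∀ x ∈ Γ, (0 : ℝ) < (x : ℝ))
    [Countable Γ]
    (hdense : ∀ r : ℝ, 0 < r → r ∈ closure {y : ℝ | ∃ γ ∈ Γ, (γ : ℝ) = y})
    (μ : Measure (Γ → Bool)) [IsProbabilityMeasure μ]
    (hμ : ∀ (F₀ : Finset Γ) (t : Γ → Bool),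
      μ {x | ∀ δ ∈ F₀, x δ = t δ} = (1 / 2 : ℝ≥0∞) ^ F₀.card)
    (E : Set (Γ → Bool)) (hE : MeasurableSet E) (hEpos : 0 < μ E)
    (r : ℝ) (hr : 0 < r) :
    r ∈ closure {y : ℝ | ∃ γ : Γ, ((γ : ℝˣ) : ℝ) = y ∧
      0 < μ ((fun x : Γ → Bool => fun δ : Γ => x (γ⁻¹ * δ)) ⁻¹' E ∩ E)} :=
  stmt16_general Γ hdense μ hμ E hE hEpos r hr
end
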